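/- Let ‖·‖ be a norm on c₀₀ that is permutation-invariant and multiplicative, let p ∈ [1,+∞), and suppose ‖1ⁿ‖ = n^{1/p} for every n ≥ 1. Then for every x ∈ c₀₀ one has ‖x‖ ≥ ‖x‖_p. -/

import Mathlib

/-- Tensor product of finitely supported sequences, regarded as a finitely
supported sequence via a fixed bijection `e : ℕ ≃ ℕ × ℕ`. -/
noncomputable def tensor (e : ℕ ≃ ℕ × ℕ) (x y : ℕ →₀ ℝ) : ℕ →₀ ℝ :=
  Finsupp.onFinset ((x.support ×ˢ y.support).image e.symm)
    (fun n => x (e n).1 * y (e n).2)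
    (fun n h => by
      simp only [Finset.mem_image, Finset.mem_product]
      exact ⟨e n, ⟨Finsupp.mem_support_iff.2 (left_ne_zero_of_mul h),
        Finsupp.mem_support_iff.2 (right_ne_zero_of_mul h)⟩, e.symm_apply_apply n⟩)

/-- The sequence `1ⁿ` consisting of `n` ones followed by zeros. -/
noncomputable def oneVec (n : ℕ) : ℕ →₀ ℝ :=
  Finsupp.indicator (Finset.range n) (fun _ _ => 1)

/-!
A multiplicative symmetric norm is 1-unconditional: tensoring with `(1, -1)` turns a sign change
of one coordinate into a transposition, and convexity then makes `N` monotone in `|x i|`.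
Hence a level set of `|U|` of size `c` at height `v` gives `N U ≥ v c^(1/p)`, so
`∑ |U n|^p ≤ (number of distinct values of |U|) · (N U)^p`. For the tensor power `U = x^{⊗r}`
one has `∑ |U n|^p = ‖x‖_p^(pr)`, `N U = (N x)^r`, and the entries of `U` are monomials
`∏ |x i|^(c i)` with `c i ≤ r`, so `‖x‖_p^(pr) ≤ (r + 1)^d (N x)^(pr)` with `d = #x.support`;
the polynomial factor disappears as `r → ∞`.
-/

open Finset

theorem exists_perm_map_eq_range (S : Finset ℕ) :
    ∃ σ : Equiv.Perm ℕ, S.map σ.toEmbedding = range #S := by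
  have hS : Cardinal.mk (S : Set ℕ) < Cardinal.mk ℕ := by
    rw [Cardinal.mk_nat]; exact Cardinal.lt_aleph0_of_finite _
  obtain ⟨σ, hσ⟩ := Cardinal.extend_function_of_lt
    (S.equivFin.toEmbedding.trans Fin.valEmbedding) hS ⟨Equiv.refl ℕ⟩
  refine ⟨σ, eq_of_subset_of_card_le (fun b hb => ?_) (by simp)⟩
  obtain ⟨a, ha, rfl⟩ := mem_map.1 hb
  simp [hσ ⟨a, ha⟩]

theorem le_of_forall_pow_le_mul_pow {a b : ℝ} (hb : 0 ≤ b) (d : ℕ)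
    (h : ∀ r : ℕ, a ^ r ≤ ((r : ℝ) + 1) ^ d * b ^ r) : a ≤ b := by
  by_contra! hba
  rcases hb.eq_or_lt with rfl | hb
  · have := h 1
    simp only [pow_one, mul_zero] at this
    linarith
  have hq : 1 < a / b := (one_lt_div hb).2 hba
  have hlim :=
    (Filter.tendsto_add_atTop_iff_nat 1).2 (tendsto_pow_const_div_const_pow_of_one_lt d hq)
  obtain ⟨n, hn⟩ := (hlim.eventually_lt_const (inv_pos.2 (zero_lt_one.trans hq))).exists
  have hpow : (a / b) ^ n ≤ ((n : ℝ) + 1) ^ d := by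
    rw [div_pow, div_le_iff₀ (pow_pos hb n)]
    exact h n
  rw [div_lt_iff₀ (pow_pos (zero_lt_one.trans hq) _), pow_succ',
    inv_mul_cancel_left₀ (by positivity)] at hn
  push_cast at hn
  linarith

theorem support_oneVec (n : ℕ) : (oneVec n).support = range n := by
  ext i; simp [oneVec, Finsupp.indicator_apply]

section Tensor

variable (e : ℕ ≃ ℕ × ℕ)

theorem tensor_apply (x y : ℕ →₀ ℝ) (n : ℕ) :
    tensor e x y n = x (e n).1 * y (e n).2 := rfl

theorem support_tensor (x y : ℕ →₀ ℝ) :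
    (tensor e x y).support = (x.support ×ˢ y.support).image e.symm := by
  ext n
  obtain ⟨⟨i, j⟩, rfl⟩ := e.symm.surjective n
  simp [tensor_apply]

theorem sum_abs_rpow_tensor (x y : ℕ →₀ ℝ) (p : ℝ) :
    ∑ n ∈ (tensor e x y).support, |tensor e x y n| ^ p
      = (∑ i ∈ x.support, |x i| ^ p) * ∑ j ∈ y.support, |y j| ^ p := by
  rw [support_tensor, sum_image (e.symm.injective.injOn), sum_mul_sum, ← sum_product']
  refine sum_congr rfl fun ij _ => ?_
  simp [tensor_apply, abs_mul, Real.mul_rpow]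

noncomputable def tensorPow (x : ℕ →₀ ℝ) : ℕ → ℕ →₀ ℝ
  | 0 => oneVec 1
  | r + 1 => tensor e x (tensorPow x r)

theorem sum_abs_rpow_tensorPow (x : ℕ →₀ ℝ) (p : ℝ) (r : ℕ) :
    ∑ n ∈ (tensorPow e x r).support, |tensorPow e x r n| ^ p
      = (∑ i ∈ x.support, |x i| ^ p) ^ r := by
  induction r with
  | zero =>
    rw [tensorPow, support_oneVec]
    simp [oneVec]
  | succ r ih => rw [tensorPow, sum_abs_rpow_tensor, ih, pow_succ']

theorem exists_abs_tensorPow_eq_prod (x : ℕ →₀ ℝ) (r : ℕ) :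
    ∀ n ∈ (tensorPow e x r).support, ∃ c : ℕ → ℕ,
      (∀ i, c i ≤ r) ∧ |tensorPow e x r n| = ∏ i ∈ x.support, |x i| ^ c i := by
  induction r with
  | zero =>
    intro n hn
    refine ⟨0, fun _ => le_rfl, ?_⟩
    rw [tensorPow, support_oneVec] at hn
    simp_all [tensorPow, oneVec, Finsupp.indicator_apply]
  | succ r ih =>
    intro n hn
    rw [tensorPow, support_tensor] at hn
    obtain ⟨⟨k, m⟩, hkm, rfl⟩ := mem_image.1 hn
    obtain ⟨hk, hm⟩ := mem_product.1 hkm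
    obtain ⟨c, hcr, hc⟩ := ih m hm
    refine ⟨c + Pi.single k 1, fun i => ?_, ?_⟩
    · have := hcr i
      rw [Pi.add_apply, Pi.single_apply]
      split_ifs <;> omega
    · have hsingle : ∏ i ∈ x.support, |x i| ^ (Pi.single k 1 : ℕ → ℕ) i = |x k| :=
        (prod_eq_single_of_mem k hk fun i _ hik => by simp [hik]).trans (by simp)
      simp only [tensorPow, tensor_apply, Equiv.apply_symm_apply, abs_mul, hc, Pi.add_apply,
        pow_add, prod_mul_distrib, hsingle, mul_comm]

theorem card_image_abs_tensorPow_le (x : ℕ →₀ ℝ) (r : ℕ) :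
    #((tensorPow e x r).support.image fun n => |tensorPow e x r n|) ≤ (r + 1) ^ #x.support := by
  calc #((tensorPow e x r).support.image fun n => |tensorPow e x r n|)
      ≤ #((Fintype.piFinset fun _ : x.support => range (r + 1)).image
          fun c : x.support → ℕ => ∏ i : x.support, |x i| ^ c i) := by
        refine card_le_card fun v hv => ?_
        obtain ⟨n, hn, rfl⟩ := mem_image.1 hv
        obtain ⟨c, hcr, hc⟩ := exists_abs_tensorPow_eq_prod e x r n hn
        refine mem_image.2 ⟨fun i : x.support => c i,
          by simpa [Nat.lt_succ_iff] using fun i _ => hcr i, ?_⟩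
        rw [hc]
        exact prod_coe_sort x.support fun i => |x i| ^ c i
    _ ≤ (r + 1) ^ #x.support := card_image_le.trans (by simp)

end Tensor

structure IsMultiplicativeSymmetricNorm (e : ℕ ≃ ℕ × ℕ) (N : (ℕ →₀ ℝ) → ℝ) : Prop where
  add_le : ∀ x y, N (x + y) ≤ N x + N y
  smul : ∀ (c : ℝ) (x), N (c • x) = |c| * N x
  eq_zero_iff : ∀ x, N x = 0 ↔ x = 0
  perm : ∀ (σ : Equiv.Perm ℕ) (x), N (Finsupp.equivMapDomain σ x) = N x
  map_tensor : ∀ x y, N (tensor e x y) = N x * N y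

namespace IsMultiplicativeSymmetricNorm

variable {e : ℕ ≃ ℕ × ℕ} {N : (ℕ →₀ ℝ) → ℝ}

theorem nonneg (hN : IsMultiplicativeSymmetricNorm e N) (x : ℕ →₀ ℝ) : 0 ≤ N x := by
  have h := hN.add_le x (-x)
  have h0 := hN.smul 0 0
  have hneg := hN.smul (-1) x
  simp only [zero_smul, abs_zero, zero_mul, neg_smul, one_smul, abs_neg, abs_one, one_mul,
    add_neg_cancel] at h h0 hneg
  linarith

theorem map_update_neg (hN : IsMultiplicativeSymmetricNorm e N) (x : ℕ →₀ ℝ) (j : ℕ) :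
    N (x.update j (-x j)) = N x := by
  set v : ℕ →₀ ℝ := Finsupp.single 0 1 - Finsupp.single 1 1
  have hv : N v ≠ 0 := fun h => by
    simpa [v] using DFunLike.congr_fun ((hN.eq_zero_iff v).1 h) 0
  have hswap : Finsupp.equivMapDomain (Equiv.swap (e.symm (0, j)) (e.symm (1, j))) (tensor e v x)
      = tensor e v (x.update j (-x j)) := by
    ext n
    obtain ⟨⟨a, i⟩, rfl⟩ := e.symm.surjective n
    rw [Finsupp.equivMapDomain_apply, Equiv.symm_swap, e.symm.injective.swap_apply]
    simp only [tensor_apply, Equiv.apply_symm_apply, Finsupp.update_apply, Equiv.swap_apply_def]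
    rcases a with _ | _ | a <;> by_cases hi : i = j <;> simp [v, hi]
  refine mul_left_cancel₀ hv ?_
  rw [← hN.map_tensor, ← hswap, hN.perm, hN.map_tensor]

theorem map_update_le (hN : IsMultiplicativeSymmetricNorm e N) (x : ℕ →₀ ℝ) (j : ℕ) {c : ℝ}
    (hc : |c| ≤ |x j|) : N (x.update j c) ≤ N x := by
  rcases eq_or_ne (x j) 0 with hxj | hxj
  · rw [hxj, abs_zero, abs_nonpos_iff] at hc
    rw [hc, ← hxj, Finsupp.update_self]
  set t := c / x j
  have ht : |t| ≤ 1 := by rwa [abs_div, div_le_one (abs_pos.2 hxj)]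
  obtain ⟨ht₁, ht₂⟩ := abs_le.1 ht
  have hconvex : x.update j c = ((1 + t) / 2) • x + ((1 - t) / 2) • x.update j (-x j) := by
    ext i
    by_cases hi : i = j
    · subst hi
      simp only [Finsupp.update_apply, if_true, Finsupp.add_apply, Finsupp.smul_apply,
        smul_eq_mul, t]
      field_simp
      ring
    · simp only [Finsupp.update_apply, hi, if_false, Finsupp.add_apply, Finsupp.smul_apply,
        smul_eq_mul]
      ring
  calc N (x.update j c)
      ≤ |(1 + t) / 2| * N x + |(1 - t) / 2| * N x := by
        rw [hconvex]
        refine (hN.add_le _ _).trans_eq ?_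
        rw [hN.smul, hN.smul, hN.map_update_neg]
    _ = N x := by
        rw [abs_of_nonneg (by linarith), abs_of_nonneg (by linarith)]
        ring

theorem le_of_abs_le (hN : IsMultiplicativeSymmetricNorm e N) {x y : ℕ →₀ ℝ}
    (h : ∀ i, |y i| ≤ |x i|) : N y ≤ N x := by
  suffices ∀ (S : Finset ℕ) (x : ℕ →₀ ℝ), (∀ i, |y i| ≤ |x i|) → (∀ i ∉ S, y i = x i) →
      N y ≤ N x from this (x.support ∪ y.support) x h fun i hi => by
        simp_all
  intro S
  induction S using Finset.induction_on with
  | empty =>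
    intro x _ hxy
    rw [Finsupp.ext fun i => hxy i (notMem_empty i)]
  | insert j S _ ih =>
    intro x hle hxy
    refine (ih (x.update j (y j)) (fun i => ?_) (fun i hi => ?_)).trans
      (hN.map_update_le x j (hle j))
    · rw [Finsupp.update_apply]; split_ifs with hij
      · rw [hij]
      · exact hle i
    · rw [Finsupp.update_apply]; split_ifs with hij
      · rw [hij]
      · exact hxy i (by simp [hij, hi])

theorem map_indicator_const (hN : IsMultiplicativeSymmetricNorm e N) (S : Finset ℕ) (c : ℝ) :
    N (Finsupp.indicator S fun _ _ => c) = |c| * N (oneVec #S) := by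
  obtain ⟨σ, hσ⟩ := exists_perm_map_eq_range S
  have h : Finsupp.equivMapDomain σ (Finsupp.indicator S fun _ _ => c) = c • oneVec #S := by
    ext b
    simp [Finsupp.indicator_apply, oneVec, ← hσ, mem_map_equiv]
  rw [← hN.perm σ, h, hN.smul]

theorem card_mul_rpow_le (hN : IsMultiplicativeSymmetricNorm e N) {p : ℝ} (hp : 0 < p)
    (hone : ∀ n : ℕ, 1 ≤ n → N (oneVec n) = (n : ℝ) ^ (1 / p)) (U : ℕ →₀ ℝ) (S : Finset ℕ)
    {v : ℝ} (hv : 0 ≤ v) (hS : ∀ n ∈ S, v ≤ |U n|) : #S * v ^ p ≤ N U ^ p := by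
  rcases S.eq_empty_or_nonempty with rfl | hne
  · simpa using Real.rpow_nonneg (hN.nonneg U) p
  have hle : v * (#S : ℝ) ^ (1 / p) ≤ N U := by
    rw [← hone _ hne.card_pos, ← abs_of_nonneg hv, ← hN.map_indicator_const]
    refine hN.le_of_abs_le fun n => ?_
    rw [Finsupp.indicator_apply]
    split_ifs with hn
    · rw [abs_of_nonneg hv]; exact hS n hn
    · simp
  calc (#S : ℝ) * v ^ p = (v * (#S : ℝ) ^ (1 / p)) ^ p := by
        rw [Real.mul_rpow hv (by positivity), ← Real.rpow_mul (by positivity),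
          one_div_mul_cancel hp.ne', Real.rpow_one, mul_comm]
    _ ≤ N U ^ p := Real.rpow_le_rpow (by positivity) hle hp.le

theorem sum_abs_rpow_le_card_mul (hN : IsMultiplicativeSymmetricNorm e N) {p : ℝ} (hp : 0 < p)
    (hone : ∀ n : ℕ, 1 ≤ n → N (oneVec n) = (n : ℝ) ^ (1 / p)) (U : ℕ →₀ ℝ) :
    ∑ n ∈ U.support, |U n| ^ p ≤ #(U.support.image fun n => |U n|) * N U ^ p := by
  rw [sum_comp (fun v => v ^ p) fun n => |U n|, ← nsmul_eq_mul]
  refine sum_le_card_nsmul _ _ _ fun v hv => ?_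
  obtain ⟨m, -, rfl⟩ := mem_image.1 hv
  rw [nsmul_eq_mul]
  exact hN.card_mul_rpow_le hp hone U _ (abs_nonneg _) fun n hn => (mem_filter.1 hn).2.ge

theorem map_tensorPow (hN : IsMultiplicativeSymmetricNorm e N) (h1 : N (oneVec 1) = 1)
    (x : ℕ →₀ ℝ) (r : ℕ) : N (tensorPow e x r) = N x ^ r := by
  induction r with
  | zero => exact h1
  | succ r ih => rw [tensorPow, hN.map_tensor, ih, pow_succ']

end IsMultiplicativeSymmetricNorm

/-- Lower bound: if `‖1ⁿ‖ = n^(1/p)` for every `n ≥ 1`, then `‖x‖ ≥ ‖x‖_p`. -/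
theorem lp_lower_bound
    (e : ℕ ≃ ℕ × ℕ) (N : (ℕ →₀ ℝ) → ℝ)
    (hadd : ∀ x y, N (x + y) ≤ N x + N y)
    (hsmul : ∀ (c : ℝ) (x), N (c • x) = |c| * N x)
    (hdef : ∀ x, N x = 0 ↔ x = 0)
    (hperm : ∀ (σ : Equiv.Perm ℕ) (x), N (Finsupp.equivMapDomain σ x) = N x)
    (hmul : ∀ x y, N (tensor e x y) = N x * N y)
    (p : ℝ) (hp : 1 ≤ p)
    (hone : ∀ n : ℕ, 1 ≤ n → N (oneVec n) = (n : ℝ) ^ (1 / p)) :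
    ∀ x : ℕ →₀ ℝ, (∑ i ∈ x.support, |x i| ^ p) ^ (1 / p) ≤ N x := by
  intro x
  have hN : IsMultiplicativeSymmetricNorm e N := ⟨hadd, hsmul, hdef, hperm, hmul⟩
  have hp₀ : 0 < p := zero_lt_one.trans_le hp
  have h1 : N (oneVec 1) = 1 := by simpa using hone 1 le_rfl
  have hpow : ∀ r : ℕ, (∑ i ∈ x.support, |x i| ^ p) ^ r
      ≤ ((r : ℝ) + 1) ^ #x.support * (N x ^ p) ^ r := fun r =>
    calc (∑ i ∈ x.support, |x i| ^ p) ^ r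
        = ∑ n ∈ (tensorPow e x r).support, |tensorPow e x r n| ^ p :=
          (sum_abs_rpow_tensorPow e x p r).symm
      _ ≤ #((tensorPow e x r).support.image fun n => |tensorPow e x r n|)
            * N (tensorPow e x r) ^ p := hN.sum_abs_rpow_le_card_mul hp₀ hone _
      _ ≤ ((r : ℝ) + 1) ^ #x.support * (N x ^ p) ^ r := by
          rw [hN.map_tensorPow h1, ← Real.rpow_pow_comm (hN.nonneg x)]
          gcongr
          · exact pow_nonneg (Real.rpow_nonneg (hN.nonneg x) p) r
          · exact_mod_cast card_image_abs_tensorPow_le e x r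
  calc (∑ i ∈ x.support, |x i| ^ p) ^ (1 / p)
      ≤ (N x ^ p) ^ (1 / p) :=
        Real.rpow_le_rpow (sum_nonneg fun i _ => by positivity)
          (le_of_forall_pow_le_mul_pow (Real.rpow_nonneg (hN.nonneg x) p) _ hpow) (by positivity)
    _ = N x := by rw [one_div, Real.rpow_rpow_inv (hN.nonneg x) hp₀.ne']
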